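/- The total number of paths from (0,0) to all points (i, n−i) for i = 0,…,n in the lattice L*_CS equals the coefficient of x^n in F*(x²)·(1/(1 − x·S(x²)) + 1/(1 − x·C(x²)) − 1), where F*, S, C are the generating functions for diagonal-path counts in L*_CS, large Schröder numbers, and Catalan numbers respectively. -/

import Mathlib

open Finset PowerSeries

/-- Large Schröder numbers. -/
def schroeder : ℕ → ℕ
  | 0 => 1
  | n + 1 => schroeder n + ∑ i : Fin (n + 1), schroeder i * schroeder (n - i)

/-- The points visited by a path (a list of steps) starting at (0,0). -/
def pts (l : List (ℤ × ℤ)) : List (ℤ × ℤ) :=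
  l.scanl (fun p s => (p.1 + s.1, p.2 + s.2)) (0, 0)

/-- The endpoint of a path starting at (0,0). -/
def endPt (l : List (ℤ × ℤ)) : ℤ × ℤ :=
  ((l.map Prod.fst).sum, (l.map Prod.snd).sum)

/-- All steps are unit steps (1,0) or (0,1). -/
def unitSteps (l : List (ℤ × ℤ)) : Prop := ∀ s ∈ l, s = (1, 0) ∨ s = (0, 1)

/-- All steps are (1,0), (0,1) or (1,1). -/
def schSteps (l : List (ℤ × ℤ)) : Prop := ∀ s ∈ l, s = (1, 0) ∨ s = (0, 1) ∨ s = (1, 1)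

/-- The path stays weakly below the diagonal y = x. -/
def weaklyBelow (l : List (ℤ × ℤ)) : Prop := ∀ p ∈ pts l, p.2 ≤ p.1

/-- The path stays strictly below the diagonal except at its start (0,0). -/
def strictBelowAfterStart (l : List (ℤ × ℤ)) : Prop :=
  ∀ p ∈ pts l, p ≠ (0, 0) → p.2 < p.1

/-- Validity of a path starting at point `p` in a lattice where steps (1,0) and (0,1)
are allowed everywhere and the diagonal step (1,1) is allowed exactly from points
satisfying `D`. -/
def okFrom (D : ℤ × ℤ → Prop) : ℤ × ℤ → List (ℤ × ℤ) → Prop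
  | _, [] => True
  | p, s :: l => (s = (1, 0) ∨ s = (0, 1) ∨ (s = (1, 1) ∧ D p)) ∧
      okFrom D (p.1 + s.1, p.2 + s.2) l

/-- Paths from (0,0) to (n,k) in the Catalan–Schröder lattice L_CS:
diagonal steps allowed from points (a,b) with b ≥ a. -/
def LCS (n k : ℕ) : Set (List (ℤ × ℤ)) :=
  {l | okFrom (fun p => p.1 ≤ p.2) (0, 0) l ∧ endPt l = ((n : ℤ), (k : ℤ))}

/-- Paths from (0,0) to (n,k) in the lattice L*_CS:
diagonal steps allowed only from points (a,b) with b > a. -/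
def LCSstar (n k : ℕ) : Set (List (ℤ × ℤ)) :=
  {l | okFrom (fun p => p.1 < p.2) (0, 0) l ∧ endPt l = ((n : ℤ), (k : ℤ))}

/-- Weakly subdiagonal unit-step paths from (0,0) to (n,k). -/
def CPath (n k : ℕ) : Set (List (ℤ × ℤ)) :=
  {l | unitSteps l ∧ endPt l = ((n : ℤ), (k : ℤ)) ∧ weaklyBelow l}

/-- Weakly subdiagonal paths from (0,0) to (n,k) with steps (1,0),(0,1),(1,1). -/
def SPath (n k : ℕ) : Set (List (ℤ × ℤ)) :=
  {l | schSteps l ∧ endPt l = ((n : ℤ), (k : ℤ)) ∧ weaklyBelow l}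

/-- Number of paths from (0,0) to (n,n) in L_CS. -/
noncomputable def fCS (n : ℕ) : ℕ := Nat.card ↥(LCS n n)

/-- Number of paths from (0,0) to (n,n) in L*_CS. -/
noncomputable def fCSstar (n : ℕ) : ℕ := Nat.card ↥(LCSstar n n)

/-- Generating function of the Catalan numbers. -/
noncomputable def catalanGF : PowerSeries ℤ := PowerSeries.mk fun n => (catalan n : ℤ)

/-- Generating function of the large Schröder numbers. -/
noncomputable def schroederGF : PowerSeries ℤ := PowerSeries.mk fun n => (schroeder n : ℤ)

/-- Generating function F(x) of diagonal path counts in L_CS. -/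
noncomputable def FGF : PowerSeries ℤ := PowerSeries.mk fun n => (fCS n : ℤ)

/-- Generating function F*(x) of diagonal path counts in L*_CS. -/
noncomputable def FstarGF : PowerSeries ℤ := PowerSeries.mk fun n => (fCSstar n : ℤ)

/-- Substitution x ↦ x² in a formal power series: g(x²). -/
noncomputable def subSq (g : PowerSeries ℤ) : PowerSeries ℤ :=
  PowerSeries.mk fun n => if 2 ∣ n then PowerSeries.coeff (n / 2) g else 0

/-- Substitution x ↦ x³ in a formal power series: g(x³). -/
noncomputable def subCube (g : PowerSeries ℤ) : PowerSeries ℤ :=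
  PowerSeries.mk fun n => if 3 ∣ n then PowerSeries.coeff (n / 3) g else 0

/-!
Counting by the last visit to the diagonal, a path of `L*_CS` to `(i, j)` is a path to some
`(m, m)` followed by a path that never returns to the diagonal. The lattice is invariant under
translation along the diagonal, so summing over the antidiagonal `i + j = n` gives
`F*(x²) · H(x)`, where `H` counts the non-returning paths by `i + j`. Such a path stays on one
side of the diagonal: below it only unit steps are available, above it all three. Splitting once
more at the last visit to the line next to the diagonal, the part below satisfies
`H₋ = 1 + x C(x²) H₋` and the part above `H₊ = 1 + x S(x²) H₊`, the diagonal returns being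
counted by Catalan and large Schröder numbers; finally `H = H₋ + H₊ - 1`.
-/

open Set

theorem Set.Ici_sdiff_self {α : Type*} [PartialOrder α] (a : α) : Ici a \ {a} = Ioi a := by
  ext; simp [lt_iff_le_and_ne]

theorem PowerSeries.invOfUnit_one_eq_of_mul_eq_one {R : Type*} [Ring R] {A B : PowerSeries R}
    (hA : constantCoeff A = 1) (h : A * B = 1) : A.invOfUnit 1 = B :=
  left_inv_eq_right_inv (invOfUnit_mul A 1 (by simp [hA])) h

theorem coeff_subSq_mul (g T : PowerSeries ℤ) (n : ℕ) :
    coeff n (subSq g * T) =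
      ∑ m ∈ range (n + 1), if 2 * m ≤ n then coeff m g * coeff (n - 2 * m) T else 0 := by
  rw [coeff_mul, Finset.Nat.sum_antidiagonal_eq_sum_range_succ_mk]
  simp only [subSq, coeff_mk, ite_mul, zero_mul]
  rw [← Finset.sum_filter, ← Finset.sum_filter]
  refine Finset.sum_nbij' (· / 2) (2 * ·) (by simp; omega) (by simp) (by simp; omega) (by simp)
    fun k hk => ?_
  rw [show n - k = n - 2 * (k / 2) by simp at hk; omega]

theorem sum_range_apply_sub_diag {M : Type*} [AddCommMonoid M] {f : ℤ × ℤ → M}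
    (hf : ∀ p : ℤ × ℤ, p.1 < 0 ∨ p.2 < 0 → f p = 0) (n m : ℕ) :
    ∑ i ∈ range (n + 1), f (((i : ℤ), (n : ℤ) - i) - ((m : ℤ), (m : ℤ))) =
      if 2 * m ≤ n then ∑ i ∈ range (n - 2 * m + 1), f ((i : ℤ), ((n - 2 * m : ℕ) : ℤ) - i)
      else 0 := by
  split_ifs with h
  · obtain ⟨k, rfl⟩ : ∃ k, n = k + 2 * m := ⟨n - 2 * m, by omega⟩
    rw [Nat.add_sub_cancel, show k + 2 * m + 1 = m + ((k + 1) + m) by ring, Finset.sum_range_add,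
      Finset.sum_range_add, Finset.sum_eq_zero fun i hi => hf _ (by simp at hi ⊢; omega),
      Finset.sum_eq_zero (s := range m) fun i hi => hf _ (by simp at hi ⊢; omega)]
    simp only [zero_add, add_zero]
    refine Finset.sum_congr rfl fun i _ => congrArg f (Prod.ext ?_ ?_) <;>
      (simp only [Prod.fst_sub, Prod.snd_sub]; push_cast; ring)
  · exact Finset.sum_eq_zero fun i hi => hf _ (by simp at hi ⊢; omega)

theorem quadrant_induction {P : ℤ × ℤ → Prop} (neg : ∀ p : ℤ × ℤ, p.1 < 0 ∨ p.2 < 0 → P p)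
    (zero : P 0)
    (step : ∀ p : ℤ × ℤ, p ≠ 0 → 0 ≤ p.1 → 0 ≤ p.2 →
      P (p - (1, 0)) → P (p - (0, 1)) → P (p - (1, 1)) → P p) (p : ℤ × ℤ) : P p := by
  induction hn : (p.1 + p.2).toNat using Nat.strong_induction_on generalizing p with
  | _ n ih =>
    by_cases hp : p.1 < 0 ∨ p.2 < 0
    · exact neg p hp
    by_cases h0 : p = 0
    · exact h0 ▸ zero
    have : p.1 ≠ 0 ∨ p.2 ≠ 0 := by
      rw [Prod.ext_iff, Prod.fst_zero, Prod.snd_zero] at h0; omega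
    exact step p h0 (by omega) (by omega)
      (ih _ (by simp only [Prod.fst_sub, Prod.snd_sub]; omega) _ rfl)
      (ih _ (by simp only [Prod.fst_sub, Prod.snd_sub]; omega) _ rfl)
      (ih _ (by simp only [Prod.fst_sub, Prod.snd_sub]; omega) _ rfl)

open Classical in
noncomputable def pathStep (R D : Set ℤ) (f : ℤ × ℤ → ℕ) (p : ℤ × ℤ) : ℕ :=
  if p.2 - p.1 ∈ R then
    f (p - (1, 0)) + f (p - (0, 1)) + if p.2 - p.1 ∈ D then f (p - (1, 1)) else 0
  else 0

open Classical in
/-- The number of lattice paths from `(0, 0)` to `p` with steps `(1, 0)`, `(0, 1)` and `(1, 1)`,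
where a diagonal step may start only at points whose offset `b - a` lies in `D`, and every point
after the start has its offset in `R`. -/
noncomputable def pathCount (R D : Set ℤ) (p : ℤ × ℤ) : ℕ :=
  if p.1 < 0 ∨ p.2 < 0 then 0
  else if h : p = 0 then 1
  else if p.2 - p.1 ∈ R then
    pathCount R D (p - (1, 0)) + pathCount R D (p - (0, 1)) +
      if p.2 - p.1 ∈ D then pathCount R D (p - (1, 1)) else 0
  else 0
termination_by (p.1 + p.2).toNat
decreasing_by
  all_goals
    simp only [Prod.fst_sub, Prod.snd_sub]
    have := Prod.ext_iff.not.1 h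
    simp only [Prod.fst_zero, Prod.snd_zero] at this
    omega

section pathCount

variable {R D : Set ℤ}

theorem pathCount_of_neg {p : ℤ × ℤ} (hp : p.1 < 0 ∨ p.2 < 0) : pathCount R D p = 0 := by
  rw [pathCount, if_pos hp]

@[simp]
theorem pathCount_zero : pathCount R D 0 = 1 := by
  rw [pathCount]; simp

theorem pathCount_eq_pathStep {p : ℤ × ℤ} (hp : p ≠ 0) :
    pathCount R D p = pathStep R D (pathCount R D) p := by
  by_cases hneg : p.1 < 0 ∨ p.2 < 0
  · have h : ∀ q : ℤ × ℤ, q = p - (1, 0) ∨ q = p - (0, 1) ∨ q = p - (1, 1) →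
        pathCount R D q = 0 := by
      rintro q (rfl | rfl | rfl) <;> exact pathCount_of_neg (by simp; omega)
    simp [pathStep, pathCount_of_neg hneg, h]
  · rw [pathCount, if_neg hneg, dif_neg hp, pathStep]

theorem pathCount_eq_zero_of_notMem {p : ℤ × ℤ} (hp : p ≠ 0) (hR : p.2 - p.1 ∉ R) :
    pathCount R D p = 0 := by
  rw [pathCount_eq_pathStep hp, pathStep, if_neg hR]

theorem pathCount_diag (h0 : 0 ∉ R) (k : ℤ) : pathCount R D (k, k) = if k = 0 then 1 else 0 := by
  split_ifs with hk
  · subst hk; exact pathCount_zero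
  · exact pathCount_eq_zero_of_notMem (by simpa using hk) (by simpa using h0)

open Pointwise in
theorem pathCount_swap (p : ℤ × ℤ) : pathCount R D p.swap = pathCount (-R) (-D) p := by
  classical
  induction p using quadrant_induction with
  | neg p hp => rw [pathCount_of_neg (by simpa [or_comm] using hp), pathCount_of_neg hp]
  | zero => simp
  | step p hp _ _ h10 h01 h11 =>
    rw [pathCount_eq_pathStep (by simpa [Prod.ext_iff, and_comm] using hp),
      pathCount_eq_pathStep hp, pathStep, pathStep, ← h10, ← h01, ← h11]
    simp only [Set.mem_neg, neg_sub, Prod.fst_swap, Prod.snd_swap, Prod.swap_sub,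
      Prod.swap_prod_mk]
    split_ifs <;> abel

theorem pathCount_congr_of_forall_mem_iff {D' : Set ℤ} (h : ∀ d ∈ R, d ∈ D ↔ d ∈ D')
    (p : ℤ × ℤ) : pathCount R D p = pathCount R D' p := by
  classical
  induction p using quadrant_induction with
  | neg p hp => rw [pathCount_of_neg hp, pathCount_of_neg hp]
  | zero => simp
  | step p hp _ _ h10 h01 h11 =>
    rw [pathCount_eq_pathStep hp, pathCount_eq_pathStep hp, pathStep, pathStep, h10, h01, h11]
    by_cases hR : p.2 - p.1 ∈ R
    · simp only [if_pos hR, h _ hR]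
    · simp only [if_neg hR]

/-- A path that avoids the diagonal after its start cannot cross it, since each step changes the
offset by at most one. -/
theorem pathCount_inter_Iio (h0 : 0 ∉ R) {p : ℤ × ℤ} (hp : p.2 ≤ p.1) :
    pathCount R D p = pathCount (R ∩ Iio 0) D p := by
  classical
  induction p using quadrant_induction with
  | neg p hneg => rw [pathCount_of_neg hneg, pathCount_of_neg hneg]
  | zero => simp
  | step p hp0 _ _ h10 h01 h11 =>
    rcases hp.eq_or_lt with hdiag | hlt
    · rw [pathCount_eq_zero_of_notMem hp0 (by simpa [hdiag] using h0),
        pathCount_eq_zero_of_notMem (R := R ∩ Iio 0) hp0 (by simp [hdiag])]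
    · simp only [Prod.fst_sub, Prod.snd_sub] at h10 h01 h11
      rw [pathCount_eq_pathStep hp0, pathCount_eq_pathStep hp0, pathStep, pathStep,
        h10 (by omega), h01 (by omega), h11 (by omega)]
      simp only [Set.mem_inter_iff, Set.mem_Iio, sub_neg.2 hlt, and_true]

open Pointwise in
theorem pathCount_inter_Ioi (h0 : 0 ∉ R) {p : ℤ × ℤ} (hp : p.1 ≤ p.2) :
    pathCount R D p = pathCount (R ∩ Ioi 0) D p := by
  have h0' : (0 : ℤ) ∉ -R := by simpa using h0
  have hswap : pathCount R D p = pathCount (-R) (-D) p.swap := by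
    rw [pathCount_swap, neg_neg, neg_neg]
  rw [hswap, pathCount_inter_Iio h0' (by simpa using hp), pathCount_swap, Set.inter_neg, neg_neg,
    neg_neg, Set.neg_Iio, neg_zero]

theorem pathCount_add_ite_eq_add (h0 : 0 ∉ R) (p : ℤ × ℤ) :
    pathCount R D p + (if p = 0 then 1 else 0) =
      pathCount (R ∩ Iio 0) D p + pathCount (R ∩ Ioi 0) D p := by
  by_cases hp : p = 0
  · simp [hp]
  have hIio : p.1 ≤ p.2 → pathCount (R ∩ Iio 0) D p = 0 := fun h =>
    pathCount_eq_zero_of_notMem hp (by simp; omega)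
  have hIoi : p.2 ≤ p.1 → pathCount (R ∩ Ioi 0) D p = 0 := fun h =>
    pathCount_eq_zero_of_notMem hp (by simp; omega)
  rw [if_neg hp, add_zero]
  rcases lt_trichotomy p.2 p.1 with hlt | heq | hgt
  · rw [← pathCount_inter_Iio h0 hlt.le, hIoi hlt.le, add_zero]
  · rw [pathCount_eq_zero_of_notMem hp (by simpa [heq] using h0), hIio heq.ge, hIoi heq.le]
  · rw [← pathCount_inter_Ioi h0 hgt.le, hIio hgt.le, zero_add]

/-- A path confined above the diagonal must start with the step `(0, 1)`. -/
theorem pathCount_add_snd_one (hR : R ⊆ Ioi 0) (h1 : 1 ∈ R) {p : ℤ × ℤ} (hp : 0 ≤ p.2) :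
    pathCount R D (p + (0, 1)) = pathCount ((· + 1) ⁻¹' R) ((· + 1) ⁻¹' D) p := by
  classical
  induction p using quadrant_induction with
  | neg p hneg => rw [pathCount_of_neg (by simp; omega), pathCount_of_neg hneg]
  | zero =>
    rw [zero_add, pathCount_eq_pathStep (p := (0, 1)) (by simp), pathStep,
      if_pos (by simpa using h1), pathCount_of_neg (p := (0, 1) - (1, 0)) (by simp),
      pathCount_of_neg (p := (0, 1) - (1, 1)) (by simp)]
    simp
  | step p hp0 _ _ h10 h01 h11 =>
    have hp1 : p + (0, 1) ≠ 0 := by simp [Prod.ext_iff]; omega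
    rcases hp.eq_or_lt with hzero | hpos
    · have : 0 < p.1 := by
        by_contra; exact hp0 (Prod.ext (by simp; omega) (by simp; omega))
      rw [pathCount_eq_zero_of_notMem hp1 (fun h => by have := hR h; simp at this; omega),
        pathCount_eq_zero_of_notMem hp0 (fun h => by have := hR h; simp at this; omega)]
    · simp only [Prod.snd_sub] at h10 h01 h11
      rw [pathCount_eq_pathStep hp1, pathCount_eq_pathStep hp0, pathStep, pathStep,
        ← h10 (by omega), ← h01 (by omega), ← h11 (by omega)]
      simp only [Set.mem_preimage, Prod.fst_add, Prod.snd_add, add_zero, sub_add_cancel,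
        add_sub_cancel_right]
      rw [show p.2 + 1 - p.1 = p.2 - p.1 + 1 by ring,
        show p - (1, 0) + (0, 1) = p + (0, 1) - (1, 0) by abel,
        show p - (1, 1) + (0, 1) = p + (0, 1) - (1, 1) by abel]

theorem sum_pathCount_mul_pathCount_sdiff_diag {N k : ℕ} (hk : k < N) :
    ∑ m ∈ range N, pathCount R D ((m : ℤ), (m : ℤ)) *
        pathCount (R \ {0}) D (((k : ℤ), (k : ℤ)) - ((m : ℤ), (m : ℤ))) =
      pathCount R D ((k : ℤ), (k : ℤ)) := by
  have h0 : (0 : ℤ) ∉ R \ {0} := by simp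
  simp only [Prod.mk_sub_mk, pathCount_diag h0, sub_eq_zero, Nat.cast_inj, mul_ite, mul_one,
    mul_zero, Finset.sum_ite_eq, Finset.mem_range, if_pos hk]

/-- Decomposition of a path by its last visit `(m, m)` to the diagonal. -/
theorem pathCount_eq_sum_diag {N : ℕ} {p : ℤ × ℤ} (hp : p.1 < N) :
    pathCount R D p = ∑ m ∈ range N, pathCount R D ((m : ℤ), (m : ℤ)) *
      pathCount (R \ {0}) D (p - ((m : ℤ), (m : ℤ))) := by
  classical
  induction p using quadrant_induction with
  | neg p hneg =>
    rw [pathCount_of_neg hneg]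
    refine (Finset.sum_eq_zero fun m _ => ?_).symm
    exact mul_eq_zero_of_right _ (pathCount_of_neg (by simp; omega))
  | zero =>
    simpa [Prod.mk_zero_zero] using
      (sum_pathCount_mul_pathCount_sdiff_diag (R := R) (D := D) (k := 0) (by simpa using hp)).symm
  | step p hp0 h1 _ h10 h01 h11 =>
    by_cases hdiag : p.1 = p.2
    · obtain ⟨k, hk⟩ := Int.eq_ofNat_of_zero_le h1
      obtain rfl : p = ((k : ℤ), (k : ℤ)) := Prod.ext hk (hdiag ▸ hk)
      exact (sum_pathCount_mul_pathCount_sdiff_diag (by simpa using hp)).symm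
    have hoff : p.2 - p.1 ≠ 0 := by omega
    have hstep (m : ℕ) : pathCount (R \ {0}) D (p - ((m : ℤ), (m : ℤ))) =
        pathStep (R \ {0}) D (pathCount (R \ {0}) D) (p - ((m : ℤ), (m : ℤ))) :=
      pathCount_eq_pathStep (by simp [Prod.ext_iff]; omega)
    have hcomm (q : ℤ × ℤ) (m : ℕ) :
        p - q - ((m : ℤ), (m : ℤ)) = p - ((m : ℤ), (m : ℤ)) - q :=
      sub_right_comm _ _ _
    simp only [Prod.fst_sub] at h10 h01 h11
    rw [pathCount_eq_pathStep hp0, pathStep, h10 (by omega), h01 (by omega), h11 (by omega)]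
    simp only [hstep, pathStep, hcomm, Prod.fst_sub, Prod.snd_sub, sub_sub_sub_cancel_right,
      Set.mem_sdiff, Set.mem_singleton_iff, hoff, not_false_eq_true, and_true]
    split_ifs <;>
      simp only [mul_add, mul_zero, Finset.sum_add_distrib, add_zero, Finset.sum_const_zero]

end pathCount

section AboveDiagonal

variable {D : Set ℤ}

theorem pathCount_Ioi_add_snd_one (hD : (· + 1) ⁻¹' D = D) {p : ℤ × ℤ} (hp : 0 ≤ p.2) :
    pathCount (Ioi 0) D (p + (0, 1)) = pathCount (Ici 0) D p := by
  rw [pathCount_add_snd_one subset_rfl (by simp) hp, hD, Set.preimage_add_const_Ioi, zero_sub,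
    show (-1 : ℤ) = 0 - 1 by rfl, Set.Ioi_sub_one_eq_Ici]

open Classical in
theorem pathCount_Ici_diag_succ (hD : (· + 1) ⁻¹' D = D) (m : ℕ) :
    pathCount (Ici 0) D ((m : ℤ) + 1, (m : ℤ) + 1) =
      ∑ j ∈ range (m + 1), pathCount (Ici 0) D ((j : ℤ), (j : ℤ)) *
        pathCount (Ici 0) D (((m - j : ℕ) : ℤ), ((m - j : ℕ) : ℤ)) +
      if 0 ∈ D then pathCount (Ici 0) D ((m : ℤ), (m : ℤ)) else 0 := by
  rw [pathCount_eq_pathStep (p := ((m : ℤ) + 1, (m : ℤ) + 1)) (by simp [Prod.ext_iff]; omega),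
    pathStep, if_pos (by simp),
    pathCount_eq_zero_of_notMem (p := ((m : ℤ) + 1, (m : ℤ) + 1) - (0, 1))
      (by simp [Prod.ext_iff]; omega) (by simp)]
  simp only [Prod.mk_sub_mk, sub_self, add_sub_cancel_right, sub_zero, add_zero]
  congr 1
  rw [pathCount_eq_sum_diag (N := m + 1) (by simp), Set.Ici_sdiff_self]
  refine Finset.sum_congr rfl fun j hj => ?_
  rw [Finset.mem_range] at hj
  rw [← pathCount_Ioi_add_snd_one hD (p := (((m - j : ℕ) : ℤ), ((m - j : ℕ) : ℤ))) (by simp)]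
  congr 2
  ext <;> simp [Nat.cast_sub (by omega : j ≤ m)]; ring

theorem pathCount_Ici_empty_diag_eq_catalan (m : ℕ) :
    pathCount (Ici 0) ∅ ((m : ℤ), (m : ℤ)) = catalan m := by
  induction m using Nat.strong_induction_on with
  | _ m ih =>
    rcases m with _ | m
    · simp [Prod.mk_zero_zero]
    rw [Nat.cast_succ, pathCount_Ici_diag_succ Set.preimage_empty, catalan_succ,
      Fin.sum_univ_eq_sum_range (fun i => catalan i * catalan (m - i))]
    simp only [Set.mem_empty_iff_false, if_false, add_zero]
    exact Finset.sum_congr rfl fun j hj => by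
      rw [Finset.mem_range] at hj; rw [ih j (by omega), ih (m - j) (by omega)]

theorem pathCount_Ici_univ_diag_eq_schroeder (m : ℕ) :
    pathCount (Ici 0) univ ((m : ℤ), (m : ℤ)) = schroeder m := by
  induction m using Nat.strong_induction_on with
  | _ m ih =>
    rcases m with _ | m
    · simp [Prod.mk_zero_zero, schroeder]
    rw [Nat.cast_succ, pathCount_Ici_diag_succ Set.preimage_univ, schroeder,
      Fin.sum_univ_eq_sum_range (fun i => schroeder i * schroeder (m - i))]
    simp only [Set.mem_univ, if_true, ih m (by omega), add_comm (schroeder m)]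
    exact congrArg (· + _) <| Finset.sum_congr rfl fun j hj => by
      rw [Finset.mem_range] at hj; rw [ih j (by omega), ih (m - j) (by omega)]

end AboveDiagonal

noncomputable def antidiagGF (R D : Set ℤ) : PowerSeries ℤ :=
  mk fun n => ∑ i ∈ range (n + 1), (pathCount R D ((i : ℤ), (n : ℤ) - i) : ℤ)

noncomputable def diagGF (R D : Set ℤ) : PowerSeries ℤ :=
  mk fun m => (pathCount R D ((m : ℤ), (m : ℤ)) : ℤ)

section GF

variable {R D : Set ℤ}

theorem antidiagGF_eq_subSq_diagGF_mul :
    antidiagGF R D = subSq (diagGF R D) * antidiagGF (R \ {0}) D := by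
  ext n
  have hsum (m : ℕ) :=
    sum_range_apply_sub_diag (fun p hp => pathCount_of_neg (R := R \ {0}) (D := D) hp) n m
  calc coeff n (antidiagGF R D)
      = ∑ i ∈ range (n + 1), ∑ m ∈ range (n + 1), (pathCount R D ((m : ℤ), (m : ℤ)) : ℤ) *
          pathCount (R \ {0}) D (((i : ℤ), (n : ℤ) - i) - ((m : ℤ), (m : ℤ))) := by
        rw [antidiagGF, coeff_mk]
        refine Finset.sum_congr rfl fun i hi => ?_
        rw [pathCount_eq_sum_diag (N := n + 1) (by simp at hi ⊢; omega)]
        push_cast; rfl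
    _ = ∑ m ∈ range (n + 1), (pathCount R D ((m : ℤ), (m : ℤ)) : ℤ) *
          ((if 2 * m ≤ n then ∑ i ∈ range (n - 2 * m + 1),
            pathCount (R \ {0}) D ((i : ℤ), ((n - 2 * m : ℕ) : ℤ) - i) else 0 : ℕ) : ℤ) := by
        rw [Finset.sum_comm]
        simp only [← hsum, Finset.mul_sum, Nat.cast_sum]
    _ = coeff n (subSq (diagGF R D) * antidiagGF (R \ {0}) D) := by
        rw [coeff_subSq_mul]
        simp only [diagGF, antidiagGF, coeff_mk, mul_ite, mul_zero, Nat.cast_ite, Nat.cast_sum,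
          Nat.cast_zero]

theorem antidiagGF_add_one (h0 : 0 ∉ R) :
    antidiagGF R D + 1 = antidiagGF (R ∩ Iio 0) D + antidiagGF (R ∩ Ioi 0) D := by
  ext n
  have hpt (i : ℕ) :=
    congrArg (Nat.cast (R := ℤ)) (pathCount_add_ite_eq_add (D := D) h0 ((i : ℤ), n - i))
  push_cast at hpt
  have hone : ∑ i ∈ range (n + 1), (if ((i : ℤ), (n : ℤ) - i) = 0 then 1 else 0 : ℤ) =
      if n = 0 then 1 else 0 := by
    rcases n with _ | n
    · simp
    · exact Finset.sum_eq_zero fun i _ => if_neg (by simp [Prod.ext_iff]; omega)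
  simp only [antidiagGF, map_add, coeff_mk, coeff_one, ← hone, ← Finset.sum_add_distrib, hpt]

open Pointwise in
theorem antidiagGF_neg : antidiagGF (-R) (-D) = antidiagGF R D := by
  ext n
  simp only [antidiagGF, coeff_mk, ← pathCount_swap, Prod.swap_prod_mk]
  rw [← Finset.sum_range_reflect]
  refine Finset.sum_congr rfl fun i hi => ?_
  rw [Finset.mem_range] at hi
  congr 3 <;> push_cast [Nat.add_sub_cancel, Nat.cast_sub (by omega : i ≤ n)] <;> ring

theorem antidiagGF_congr_of_forall_mem_iff {D' : Set ℤ} (h : ∀ d ∈ R, d ∈ D ↔ d ∈ D') :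
    antidiagGF R D = antidiagGF R D' := by
  simp only [antidiagGF, pathCount_congr_of_forall_mem_iff h]

end GF

section AboveDiagonalGF

variable {D : Set ℤ}

theorem antidiagGF_Ioi_eq_one_add_X_mul (hD : (· + 1) ⁻¹' D = D) :
    antidiagGF (Ioi 0) D = 1 + X * antidiagGF (Ici 0) D := by
  ext n
  rcases n with _ | n
  · simp [antidiagGF, Prod.mk_zero_zero]
  rw [map_add, coeff_succ_X_mul, coeff_one, if_neg n.succ_ne_zero, zero_add, antidiagGF,
    antidiagGF, coeff_mk, coeff_mk, Finset.sum_range_succ,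
    pathCount_eq_zero_of_notMem (p := ((n + 1 : ℕ), ((n + 1 : ℕ) : ℤ) - (n + 1 : ℕ)))
      (by simp [Prod.ext_iff]; omega) (by simp), Nat.cast_zero, add_zero]
  refine Finset.sum_congr rfl fun i hi => ?_
  rw [Finset.mem_range] at hi
  rw [← pathCount_Ioi_add_snd_one hD (p := ((i : ℤ), (n : ℤ) - i)) (by simp; omega)]
  congr 2
  ext <;> simp; ring

theorem invOfUnit_one_sub_X_mul_subSq_diagGF (hD : (· + 1) ⁻¹' D = D) :
    (1 - X * subSq (diagGF (Ici 0) D)).invOfUnit 1 = antidiagGF (Ioi 0) D := by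
  refine invOfUnit_one_eq_of_mul_eq_one (by simp) ?_
  have h := antidiagGF_Ioi_eq_one_add_X_mul hD
  rw [antidiagGF_eq_subSq_diagGF_mul (R := Ici 0), Set.Ici_sdiff_self] at h
  linear_combination h

theorem diagGF_Ici_empty_eq_catalanGF : diagGF (Ici 0) ∅ = catalanGF := by
  ext m; simp [diagGF, catalanGF, pathCount_Ici_empty_diag_eq_catalan]

theorem diagGF_Ici_univ_eq_schroederGF : diagGF (Ici 0) univ = schroederGF := by
  ext m; simp [diagGF, schroederGF, pathCount_Ici_univ_diag_eq_schroeder]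

end AboveDiagonalGF

open Pointwise in
theorem antidiagGF_univ_sdiff_zero :
    antidiagGF (univ \ {0}) (Ioi 0) = antidiagGF (Ioi 0) univ + antidiagGF (Ioi 0) ∅ - 1 := by
  have hsplit := antidiagGF_add_one (R := univ \ {0}) (D := Ioi 0) (by simp)
  have hneg : antidiagGF (univ \ {0} ∩ Iio 0) (Ioi 0) = antidiagGF (Ioi 0) ∅ := by
    rw [show univ \ {0} ∩ Iio 0 = Iio (0 : ℤ) by ext; simp; omega, ← antidiagGF_neg (R := Iio 0),
      Set.neg_Iio, Set.neg_Ioi, neg_zero]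
    exact antidiagGF_congr_of_forall_mem_iff fun d hd => by simp at hd ⊢; omega
  have hpos : antidiagGF (univ \ {0} ∩ Ioi 0) (Ioi 0) = antidiagGF (Ioi 0) univ := by
    rw [show univ \ {0} ∩ Ioi 0 = Ioi (0 : ℤ) by ext; simp; omega]
    exact antidiagGF_congr_of_forall_mem_iff fun d hd => by simpa using hd
  rw [hneg, hpos] at hsplit
  linear_combination hsplit

section Lists

variable {P : ℤ × ℤ → Prop}

theorem endPt_cons (s : ℤ × ℤ) (l : List (ℤ × ℤ)) : endPt (s :: l) = s + endPt l := by
  simp [endPt, Prod.ext_iff]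

theorem endPt_append_singleton (l : List (ℤ × ℤ)) (s : ℤ × ℤ) :
    endPt (l ++ [s]) = endPt l + s := by
  simp [endPt, Prod.ext_iff]

theorem okFrom_append_singleton (p s : ℤ × ℤ) (l : List (ℤ × ℤ)) :
    okFrom P p (l ++ [s]) ↔
      okFrom P p l ∧ (s = (1, 0) ∨ s = (0, 1) ∨ (s = (1, 1) ∧ P (p + endPt l))) := by
  induction l generalizing p with
  | nil => simp [okFrom, endPt, Prod.mk_zero_zero]
  | cons a l ih =>
    simp only [List.cons_append, okFrom, ih, endPt_cons, and_assoc, ← add_assoc]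
    rfl

theorem endPt_nonneg_of_okFrom {p : ℤ × ℤ} {l : List (ℤ × ℤ)} (h : okFrom P p l) :
    0 ≤ (endPt l).1 ∧ 0 ≤ (endPt l).2 := by
  induction l generalizing p with
  | nil => simp [endPt]
  | cons s l ih =>
    obtain ⟨hs, hl⟩ := h
    have := ih hl
    rw [endPt_cons]
    rcases hs with rfl | rfl | ⟨rfl, -⟩ <;> simp <;> omega

theorem disjoint_image_append_singleton {s t : ℤ × ℤ} (h : s ≠ t) (A B : Set (List (ℤ × ℤ))) :
    Disjoint ((· ++ [s]) '' A) ((· ++ [t]) '' B) :=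
  Set.disjoint_left.2 fun _ ⟨_, _, ha⟩ ⟨_, _, hb⟩ =>
    h (List.singleton_inj.1 (List.append_inj' (ha.trans hb.symm) rfl).2)

theorem encard_image_append_singleton (s : ℤ × ℤ) (A : Set (List (ℤ × ℤ))) :
    ((· ++ [s]) '' A).encard = A.encard :=
  (List.append_left_injective [s]).encard_image A

end Lists

def latticePaths (D : Set ℤ) (z : ℤ × ℤ) : Set (List (ℤ × ℤ)) :=
  {l | okFrom (fun p => p.2 - p.1 ∈ D) (0, 0) l ∧ endPt l = z}

section latticePaths

variable {D : Set ℤ}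

theorem append_singleton_mem_latticePaths {z s : ℤ × ℤ} {l : List (ℤ × ℤ)} :
    l ++ [s] ∈ latticePaths D z ↔
      l ∈ latticePaths D (z - s) ∧ (s = (1, 0) ∨ s = (0, 1) ∨ (s = (1, 1) ∧ z.2 - z.1 ∈ D)) := by
  simp only [latticePaths, Set.mem_ofPred_eq, okFrom_append_singleton, endPt_append_singleton,
    eq_sub_iff_add_eq]
  constructor
  · rintro ⟨⟨hl, hs⟩, rfl⟩
    refine ⟨⟨hl, rfl⟩, ?_⟩
    rcases hs with hs | hs | ⟨rfl, hD⟩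
    · exact Or.inl hs
    · exact Or.inr (Or.inl hs)
    · simpa using hD
  · rintro ⟨⟨hl, rfl⟩, hs⟩
    refine ⟨⟨hl, ?_⟩, rfl⟩
    rcases hs with hs | hs | ⟨rfl, hD⟩
    · exact Or.inl hs
    · exact Or.inr (Or.inl hs)
    · simpa using hD

theorem latticePaths_of_neg {z : ℤ × ℤ} (hz : z.1 < 0 ∨ z.2 < 0) : latticePaths D z = ∅ := by
  refine Set.eq_empty_of_forall_notMem fun l ⟨hl, hend⟩ => ?_
  have := endPt_nonneg_of_okFrom hl
  rw [hend] at this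
  omega

theorem latticePaths_zero : latticePaths D 0 = {[]} := by
  refine Set.eq_singleton_iff_unique_mem.2 ⟨⟨trivial, rfl⟩, fun l hl => ?_⟩
  rcases l.eq_nil_or_concat' with rfl | ⟨t, s, rfl⟩
  · rfl
  obtain ⟨ht, hs⟩ := append_singleton_mem_latticePaths.1 hl
  have := endPt_nonneg_of_okFrom ht.1
  rw [ht.2] at this
  rcases hs with rfl | rfl | ⟨rfl, -⟩ <;> simp at this

open Classical in
theorem latticePaths_eq_union {z : ℤ × ℤ} (hz : z ≠ 0) :
    latticePaths D z =
      (· ++ [(1, 0)]) '' latticePaths D (z - (1, 0)) ∪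
        (· ++ [(0, 1)]) '' latticePaths D (z - (0, 1)) ∪
        if z.2 - z.1 ∈ D then (· ++ [(1, 1)]) '' latticePaths D (z - (1, 1)) else ∅ := by
  ext l
  rcases l.eq_nil_or_concat' with rfl | ⟨t, s, rfl⟩
  · have : [] ∉ latticePaths D z := fun h => hz (h.2 ▸ rfl)
    split_ifs <;> simp [this]
  · rw [append_singleton_mem_latticePaths]
    split_ifs with hD <;> simp only [hD] <;> aesop

theorem encard_latticePaths (z : ℤ × ℤ) : (latticePaths D z).encard = pathCount univ D z := by
  classical
  induction z using quadrant_induction with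
  | neg z hz => simp [latticePaths_of_neg hz, pathCount_of_neg hz]
  | zero => simp [latticePaths_zero]
  | step z hz _ _ h10 h01 h11 =>
    have hd : Disjoint ((· ++ [(1, 0)]) '' latticePaths D (z - (1, 0)))
        ((· ++ [(0, 1)]) '' latticePaths D (z - (0, 1))) :=
      disjoint_image_append_singleton (by simp) _ _
    rw [latticePaths_eq_union hz, pathCount_eq_pathStep hz, pathStep, if_pos (mem_univ _)]
    split_ifs
    · rw [Set.encard_union_eq (Set.disjoint_union_left.2
          ⟨disjoint_image_append_singleton (by simp) _ _,
            disjoint_image_append_singleton (by simp) _ _⟩), Set.encard_union_eq hd]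
      simp only [encard_image_append_singleton, h10, h01, h11, Nat.cast_add]
    · rw [Set.union_empty, Set.encard_union_eq hd]
      simp only [encard_image_append_singleton, h10, h01, add_zero, Nat.cast_add]

end latticePaths

theorem card_LCSstar (i j : ℕ) :
    Nat.card (LCSstar i j) = pathCount univ (Ioi 0) ((i : ℤ), (j : ℤ)) := by
  rw [Nat.card_coe_set_eq, Set.ncard_def, show LCSstar i j = latticePaths (Ioi 0) (i, j) by
    simp [LCSstar, latticePaths], encard_latticePaths, ENat.toNat_natCast]

theorem FstarGF_eq_diagGF : FstarGF = diagGF univ (Ioi 0) := by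
  ext m; rw [FstarGF, diagGF, coeff_mk, coeff_mk, fCSstar, card_LCSstar]

theorem sum_card_LCSstar_eq_coeff_antidiagGF (n : ℕ) :
    ((∑ i ∈ Finset.range (n + 1), Nat.card ↥(LCSstar i (n - i))) : ℤ) =
      coeff n (antidiagGF univ (Ioi 0)) := by
  rw [antidiagGF, coeff_mk]
  refine Finset.sum_congr rfl fun i hi => ?_
  rw [card_LCSstar, Nat.cast_sub (by simpa [Nat.lt_succ_iff] using hi)]

/-- the total number of paths from (0,0) to the points (i, n−i),
i = 0,…,n, in L*_CS equals
[x^n] F*(x²)·(1/(1 − x·S(x²)) + 1/(1 − x·C(x²)) − 1). -/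
theorem LCSstar_antidiagonal_total (n : ℕ) :
    ((∑ i ∈ Finset.range (n + 1), Nat.card ↥(LCSstar i (n - i))) : ℤ) =
      PowerSeries.coeff n
        (subSq FstarGF *
          ((1 - PowerSeries.X * subSq schroederGF).invOfUnit 1 +
           (1 - PowerSeries.X * subSq catalanGF).invOfUnit 1 - 1)) := by
  rw [sum_card_LCSstar_eq_coeff_antidiagGF, antidiagGF_eq_subSq_diagGF_mul, FstarGF_eq_diagGF,
    ← diagGF_Ici_univ_eq_schroederGF, ← diagGF_Ici_empty_eq_catalanGF,
    invOfUnit_one_sub_X_mul_subSq_diagGF Set.preimage_univ,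
    invOfUnit_one_sub_X_mul_subSq_diagGF Set.preimage_empty, antidiagGF_univ_sdiff_zero]
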